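/- For a Rice random variable R with density f₁(r) = (2r/σ_n²)exp(−(r²+a²)/σ_n²)I₀(2ar/σ_n²), the expectation of ℓ(r) = log I₀(2ar/σ_n²) − a²/σ_n² under f₁ is strictly positive for every a > 0, i.e., I(a) := E_{f₁}[ℓ(R)] > 0. -/

import Mathlib

/-- Modified Bessel function of the first kind of order zero. -/
noncomputable def besselI0 (x : ℝ) : ℝ := ∑' k : ℕ, (x / 2) ^ (2 * k) / (Nat.factorial k) ^ 2

open MeasureTheory Set
open scoped ENNReal

lemma besselI0_term_nonneg (x : ℝ) (k : ℕ) :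
    0 ≤ (x / 2) ^ (2 * k) / (Nat.factorial k : ℝ) ^ 2 := by
  apply div_nonneg _ (by positivity)
  rw [pow_mul]; positivity

lemma besselI0_summable (x : ℝ) :
    Summable (fun k : ℕ => (x / 2) ^ (2 * k) / (Nat.factorial k : ℝ) ^ 2) := by
  refine Summable.of_nonneg_of_le (besselI0_term_nonneg x) (fun k => ?_)
    (Real.summable_pow_div_factorial (x ^ 2 / 4))
  rw [pow_mul, show (x / 2) ^ 2 = x ^ 2 / 4 by ring]
  have h1 : (1 : ℝ) ≤ (Nat.factorial k : ℝ) := by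
    exact_mod_cast Nat.one_le_iff_ne_zero.mpr (Nat.factorial_ne_zero k)
  have : (Nat.factorial k : ℝ) ≤ (Nat.factorial k : ℝ) ^ 2 := by nlinarith
  gcongr

lemma one_le_besselI0 (x : ℝ) : 1 ≤ besselI0 x := by
  have := Summable.le_tsum (besselI0_summable x) 0 (fun k _ => besselI0_term_nonneg x k)
  simpa [besselI0] using this

lemma besselI0_pos (x : ℝ) : 0 < besselI0 x := lt_of_lt_of_le one_pos (one_le_besselI0 x)

lemma measurable_besselI0 : Measurable besselI0 := by
  have : ∀ n : ℕ, Measurable (fun x : ℝ => ∑ k ∈ Finset.range n,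
      (x / 2) ^ (2 * k) / (Nat.factorial k : ℝ) ^ 2) := by
    intro n
    exact Finset.measurable_sum _ (fun k _ => by fun_prop)
  refine measurable_of_tendsto_metrizable this (tendsto_pi_nhds.2 fun x => ?_)
  exact (besselI0_summable x).hasSum.tendsto_sum_nat

lemma factorial_sq_bound (k : ℕ) : (Nat.factorial (2 * k) : ℝ) ≤ 4 ^ k * (Nat.factorial k : ℝ) ^ 2 := by
  induction k with
  | zero => simp
  | succ n ih =>
    have h : 2 * (n + 1) = (2 * n) + 1 + 1 := by ring
    rw [h, Nat.factorial_succ, Nat.factorial_succ, Nat.factorial_succ]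
    push_cast
    have hn : (0 : ℝ) ≤ ((2 * n).factorial : ℝ) := Nat.cast_nonneg _
    have hpos : (0:ℝ) ≤ (2*(n:ℝ)+2)*(2*(n:ℝ)+1) := by positivity
    have key := mul_le_mul_of_nonneg_left ih hpos
    have hn1 : (1:ℝ) ≤ (Nat.factorial n : ℝ) := by
      exact_mod_cast Nat.one_le_iff_ne_zero.mpr (Nat.factorial_ne_zero n)
    have h4 : (0:ℝ) ≤ 4 ^ n * (Nat.factorial n : ℝ) ^ 2 := by positivity
    have hcoef : ((2*(n:ℝ)+2)*(2*(n:ℝ)+1)) * (4 ^ n * (Nat.factorial n : ℝ) ^ 2)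
        ≤ (4*((n:ℝ)+1)^2) * (4 ^ n * (Nat.factorial n : ℝ) ^ 2) := by
      apply mul_le_mul_of_nonneg_right _ h4
      nlinarith [(Nat.cast_nonneg n : (0:ℝ) ≤ (n:ℝ))]
    have hexp : (4:ℝ)*((n:ℝ)+1)^2 * (4 ^ n * (Nat.factorial n : ℝ) ^ 2)
        = 4^(n+1) * (((n:ℝ)+1)*(Nat.factorial n : ℝ))^2 := by ring
    push_cast at key ⊢
    nlinarith [(Nat.cast_nonneg n : (0:ℝ) ≤ (n:ℝ))]

lemma besselI0_le_exp {x : ℝ} (hx : 0 ≤ x) : besselI0 x ≤ Real.exp x := by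
  have hexp : Real.exp x = ∑' n : ℕ, x ^ n / (Nat.factorial n : ℝ) := by
    rw [Real.exp_eq_exp_ℝ, NormedSpace.exp_eq_tsum_div]
  rw [besselI0, hexp]
  have hsum_exp : Summable (fun n : ℕ => x ^ n / (Nat.factorial n : ℝ)) :=
    Real.summable_pow_div_factorial x
  refine Summable.tsum_le_tsum_of_inj (fun k => 2 * k) (fun a b hab => by simpa using hab)
    (fun n _ => by positivity) (fun k => ?_) (besselI0_summable x) hsum_exp
  have hfac := factorial_sq_bound k
  have h1 : (x / 2) ^ (2 * k) = x ^ (2 * k) / 4 ^ k := by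
    rw [div_pow, pow_mul, pow_mul, show ((2:ℝ))^2 = 4 by norm_num]
  rw [h1, div_div]
  gcongr

lemma moment_integrableOn {b : ℝ} (hb : 0 < b) (k : ℕ) :
    IntegrableOn (fun r : ℝ => r ^ k * Real.exp (-(b * r ^ 2))) (Ioi 0) := by
  have h := (integrable_rpow_mul_exp_neg_mul_sq hb
    (lt_of_lt_of_le neg_one_lt_zero (Nat.cast_nonneg k))).integrableOn
    (s := Ioi (0:ℝ))
  refine (h.congr_fun (fun x hx => ?_) measurableSet_Ioi)
  simp only [Real.rpow_natCast, neg_mul]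

lemma moment_eq {b : ℝ} (hb : 0 < b) (k : ℕ) :
    ∫ r in Ioi (0:ℝ), 2 * b * r ^ (2 * k + 1) * Real.exp (-(b * r ^ 2))
      = (Nat.factorial k : ℝ) / b ^ k := by
  have hsub := integral_comp_rpow_Ioi_of_pos
    (g := fun t : ℝ => b * t ^ k * Real.exp (-(b * t))) (p := 2) zero_lt_two
  have h1 : ∫ x in Ioi (0:ℝ), (2 * x ^ ((2:ℝ) - 1)) •
      (b * (x ^ (2:ℝ)) ^ k * Real.exp (-(b * x ^ (2:ℝ))))
      = ∫ r in Ioi (0:ℝ), 2 * b * r ^ (2 * k + 1) * Real.exp (-(b * r ^ 2)) := by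
    refine setIntegral_congr_fun measurableSet_Ioi (fun x hx => ?_)
    have hx0 : (0:ℝ) ≤ x := le_of_lt hx
    have h2 : x ^ (2:ℝ) = x ^ 2 := by
      rw [show (2:ℝ) = ((2:ℕ):ℝ) by norm_num, Real.rpow_natCast]
    rw [show (2:ℝ) - 1 = 1 by norm_num, Real.rpow_one, h2, smul_eq_mul, ← pow_mul]
    ring
  have h2 : ∫ t in Ioi (0:ℝ), b * t ^ k * Real.exp (-(b * t))
      = (Nat.factorial k : ℝ) / b ^ k := by
    have hg : ∫ t in Ioi (0:ℝ), t ^ ((k:ℝ) + 1 - 1) * Real.exp (-(b * t))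
        = (1 / b) ^ ((k:ℝ) + 1) * Real.Gamma ((k:ℝ) + 1) :=
      Real.integral_rpow_mul_exp_neg_mul_Ioi (by positivity) hb
    have hg' : ∫ t in Ioi (0:ℝ), t ^ ((k:ℝ) + 1 - 1) * Real.exp (-(b * t))
        = ∫ t in Ioi (0:ℝ), t ^ k * Real.exp (-(b * t)) := by
      refine setIntegral_congr_fun measurableSet_Ioi (fun t ht => ?_)
      rw [show (k:ℝ) + 1 - 1 = ((k:ℕ):ℝ) by ring, Real.rpow_natCast]
    have hG : Real.Gamma ((k:ℝ) + 1) = (Nat.factorial k : ℝ) := Real.Gamma_nat_eq_factorial k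
    have hb' : (1 / b) ^ ((k:ℝ) + 1) = 1 / b ^ (k + 1 : ℕ) := by
      rw [show ((k:ℝ) + 1) = ((k + 1 : ℕ) : ℝ) by push_cast; ring, Real.rpow_natCast, div_pow,
        one_pow]
    have : ∫ t in Ioi (0:ℝ), b * t ^ k * Real.exp (-(b * t))
        = b * ∫ t in Ioi (0:ℝ), t ^ k * Real.exp (-(b * t)) := by
      rw [← integral_const_mul]
      congr 1; ext t; ring
    rw [this, ← hg', hg, hG, hb', pow_succ]
    field_simp
  calc ∫ r in Ioi (0:ℝ), 2 * b * r ^ (2 * k + 1) * Real.exp (-(b * r ^ 2))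
      = ∫ t in Ioi (0:ℝ), b * t ^ k * Real.exp (-(b * t)) := by rw [← h1]; exact hsub
    _ = (Nat.factorial k : ℝ) / b ^ k := h2

lemma exp_tsum_eq (x : ℝ) : ∑' n : ℕ, x ^ n / (Nat.factorial n : ℝ) = Real.exp x := by
  rw [Real.exp_eq_exp_ℝ, NormedSpace.exp_eq_tsum_div]

lemma integrable_mul_exp_quadratic {b : ℝ} (β γ : ℝ) (hb : 0 < b) :
    Integrable (fun r : ℝ => r * Real.exp (-(b * r ^ 2) + β * r + γ)) := by
  set m : ℝ := β / (2 * b) with hm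
  set K : ℝ := Real.exp (γ + β ^ 2 / (4 * b)) with hK
  have h1 : Integrable (fun x : ℝ => x * Real.exp (-(b * x ^ 2))) :=
    (integrable_mul_exp_neg_mul_sq hb).congr (ae_of_all _ fun x => by simp [neg_mul])
  have h2 : Integrable (fun x : ℝ => (x - m) * Real.exp (-(b * (x - m) ^ 2))) :=
    h1.comp_sub_right m
  have h3' : Integrable (fun x : ℝ => Real.exp (-(b * x ^ 2))) :=
    (integrable_exp_neg_mul_sq hb).congr (ae_of_all _ fun x => by simp [neg_mul])
  have h3 : Integrable (fun x : ℝ => Real.exp (-(b * (x - m) ^ 2))) := h3'.comp_sub_right m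
  refine ((h2.const_mul K).add (h3.const_mul (K * m))).congr (ae_of_all _ fun r => ?_)
  have e1 : K * Real.exp (-(b * (r - m) ^ 2)) = Real.exp (-(b * r ^ 2) + β * r + γ) := by
    rw [hK, ← Real.exp_add]
    congr 1
    rw [hm]
    field_simp
    ring
  calc K * ((r - m) * Real.exp (-(b * (r - m) ^ 2)))
        + K * m * Real.exp (-(b * (r - m) ^ 2))
      = r * (K * Real.exp (-(b * (r - m) ^ 2))) := by ring
    _ = r * Real.exp (-(b * r ^ 2) + β * r + γ) := by rw [e1]

lemma rice_norm {b a : ℝ} (hb : 0 < b) (ha : 0 < a) :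
    ∫ r in Ioi (0:ℝ), 2 * b * r * Real.exp (-(b * r ^ 2)) * besselI0 (2 * a * b * r)
      = Real.exp (a ^ 2 * b) := by
  set h : ℕ → ℝ → ℝ := fun k r =>
    ((a * b) ^ (2 * k) / (Nat.factorial k : ℝ) ^ 2) * (2 * b * (r ^ (2 * k + 1)
      * Real.exp (-(b * r ^ 2)))) with hh
  have hpt : ∀ r ∈ Ioi (0:ℝ),
      2 * b * r * Real.exp (-(b * r ^ 2)) * besselI0 (2 * a * b * r) = ∑' k, h k r := by
    intro r _
    rw [besselI0, ← tsum_mul_left]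
    refine tsum_congr fun k => ?_
    rw [hh]
    have : (2 * a * b * r / 2) = a * b * r := by ring
    rw [this]
    ring
  have hint : ∀ k, IntegrableOn (h k) (Ioi (0:ℝ)) := by
    intro k
    exact (((moment_integrableOn hb (2 * k + 1)).const_mul (2*b)).const_mul _)
  have hnn : ∀ k, ∀ r ∈ Ioi (0:ℝ), 0 ≤ h k r := by
    intro k r hr
    have hr0 : (0:ℝ) < r := hr
    rw [hh]
    have : (0:ℝ) ≤ (a * b) ^ (2 * k) := by rw [pow_mul]; positivity
    positivity
  have hval : ∀ k, ∫ r in Ioi (0:ℝ), h k r = (a ^ 2 * b) ^ k / (Nat.factorial k : ℝ) := by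
    intro k
    have : ∫ r in Ioi (0:ℝ), h k r
        = ((a * b) ^ (2 * k) / (Nat.factorial k : ℝ) ^ 2)
          * ∫ r in Ioi (0:ℝ), 2 * b * r ^ (2 * k + 1) * Real.exp (-(b * r ^ 2)) := by
      rw [← integral_const_mul]
      refine setIntegral_congr_fun measurableSet_Ioi (fun r _ => ?_)
      rw [hh]; ring
    rw [this, moment_eq hb k]
    have hab : (a * b) ^ (2 * k) = (a ^ 2 * b) ^ k * b ^ k := by
      rw [pow_mul, ← mul_pow]
      congr 1
      ring
    have hfk : (Nat.factorial k : ℝ) ≠ 0 := by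
      exact_mod_cast Nat.factorial_ne_zero k
    rw [hab]
    field_simp
  have hmeas : ∀ k, AEStronglyMeasurable (h k) (volume.restrict (Ioi (0:ℝ))) := by
    intro k
    apply Measurable.aestronglyMeasurable
    rw [hh]
    fun_prop
  have hlint : ∀ k, ∫⁻ r in Ioi (0:ℝ), ‖h k r‖₊
      = ENNReal.ofReal ((a ^ 2 * b) ^ k / (Nat.factorial k : ℝ)) := by
    intro k
    have hnn_ae : 0 ≤ᵐ[volume.restrict (Ioi (0:ℝ))] h k :=
      (ae_restrict_mem measurableSet_Ioi).mono fun r hr => hnn k r hr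
    have h1 : ∫⁻ r in Ioi (0:ℝ), ‖h k r‖₊ = ∫⁻ r in Ioi (0:ℝ), ENNReal.ofReal (h k r) := by
      refine lintegral_congr_ae (hnn_ae.mono fun r hr => ?_)
      simp only [Pi.zero_apply] at hr
      simp only [← enorm_eq_nnnorm, ← ofReal_norm, Real.norm_of_nonneg hr]
    rw [h1, ← ofReal_integral_eq_lintegral_ofReal (hint k) hnn_ae, hval k]
  have hsum : Summable (fun k : ℕ => (a ^ 2 * b) ^ k / (Nat.factorial k : ℝ)) :=
    Real.summable_pow_div_factorial _
  have hnn' : ∀ k : ℕ, 0 ≤ (a ^ 2 * b) ^ k / (Nat.factorial k : ℝ) := by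
    intro k; positivity
  have hfin : ∑' k, ∫⁻ r in Ioi (0:ℝ), ‖h k r‖₊ ≠ ⊤ := by
    rw [tsum_congr hlint, ← ENNReal.ofReal_tsum_of_nonneg hnn' hsum]
    exact ENNReal.ofReal_ne_top
  calc ∫ r in Ioi (0:ℝ), 2 * b * r * Real.exp (-(b * r ^ 2)) * besselI0 (2 * a * b * r)
      = ∫ r in Ioi (0:ℝ), ∑' k, h k r :=
        setIntegral_congr_fun measurableSet_Ioi hpt
    _ = ∑' k, ∫ r in Ioi (0:ℝ), h k r := integral_tsum hmeas hfin
    _ = ∑' k, (a ^ 2 * b) ^ k / (Nat.factorial k : ℝ) := tsum_congr hval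
    _ = Real.exp (a ^ 2 * b) := exp_tsum_eq _

lemma besselI0_le_exp_sq (x : ℝ) : besselI0 x ≤ Real.exp ((x / 2) ^ 2) := by
  rw [besselI0, ← exp_tsum_eq]
  refine Summable.tsum_le_tsum (fun k => ?_) (besselI0_summable x)
    (Real.summable_pow_div_factorial _)
  rw [pow_mul]
  have h1 : (1 : ℝ) ≤ (Nat.factorial k : ℝ) := by
    exact_mod_cast Nat.one_le_iff_ne_zero.mpr (Nat.factorial_ne_zero k)
  have : (Nat.factorial k : ℝ) ≤ (Nat.factorial k : ℝ) ^ 2 := by nlinarith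
  gcongr

lemma sub_one_le_mul_log {v : ℝ} (hv : 0 < v) : v - 1 ≤ v * Real.log v := by
  have h := Real.log_le_sub_one_of_pos (show (0:ℝ) < v⁻¹ by positivity)
  rw [Real.log_inv] at h
  have h2 := mul_le_mul_of_nonneg_left h hv.le
  have hv1 : v * v⁻¹ = 1 := mul_inv_cancel₀ hv.ne'
  nlinarith

lemma sub_one_lt_mul_log {v : ℝ} (hv : 0 < v) (hne : v ≠ 1) : v - 1 < v * Real.log v := by
  have hinv : v⁻¹ ≠ 1 := by
    intro h; apply hne
    have := congrArg (·⁻¹) h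
    simpa using this
  have h := Real.log_lt_sub_one_of_pos (show (0:ℝ) < v⁻¹ by positivity) hinv
  rw [Real.log_inv] at h
  have h2 := mul_lt_mul_of_pos_left h hv
  have hv1 : v * v⁻¹ = 1 := mul_inv_cancel₀ hv.ne'
  nlinarith

lemma neg_exp_le_mul_log {v : ℝ} (hv : 0 < v) : -Real.exp (-1) ≤ v * Real.log v := by
  have h := Real.add_one_le_exp (-Real.log v + -1)
  rw [Real.exp_add, Real.exp_neg, Real.exp_log hv] at h
  have h2 := mul_le_mul_of_nonneg_left h hv.le
  have hv1 : v * v⁻¹ = 1 := mul_inv_cancel₀ hv.ne'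
  nlinarith [Real.exp_pos (-1 : ℝ)]


/-- The expected log-likelihood ratio under the Rice density (the KL divergence
`D(f₁‖f₀)`) is strictly positive. -/
theorem expected_llr_under_rice_pos (σn a : ℝ) (hσ : 0 < σn) (ha : 0 < a) :
    0 < ∫ r in Set.Ioi (0 : ℝ),
        (Real.log (besselI0 (2 * a * r / σn ^ 2)) - a ^ 2 / σn ^ 2)
          * (2 * r / σn ^ 2 * Real.exp (-(r ^ 2 + a ^ 2) / σn ^ 2)
            * besselI0 (2 * a * r / σn ^ 2)) := by
  have hσ2 : (0:ℝ) < σn ^ 2 := by positivity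
  set b : ℝ := (σn ^ 2)⁻¹ with hbdef
  have hb : 0 < b := by positivity
  set t : ℝ := a ^ 2 * b with htdef
  have ht : 0 < t := by positivity
  set c : ℝ := 2 * a * b with hcdef
  have hc : 0 < c := by positivity
  set E : ℝ → ℝ := fun r => 2 * b * r * Real.exp (-(b * r ^ 2)) with hEdef
  set B : ℝ → ℝ := fun r => besselI0 (2 * a * b * r) with hBdef
  set v : ℝ → ℝ := fun r => Real.exp (-t) * B r with hvdef
  have hBpos : ∀ r, 0 < B r := fun r => besselI0_pos _
  have hvpos : ∀ r, 0 < v r := fun r => mul_pos (Real.exp_pos _) (hBpos r)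
  have hEnn : ∀ r ∈ Ioi (0:ℝ), 0 ≤ E r := by
    intro r hr
    have : (0:ℝ) < r := hr
    rw [hEdef]; positivity
  have hEpos : ∀ r ∈ Ioi (0:ℝ), 0 < E r := by
    intro r hr
    have : (0:ℝ) < r := hr
    rw [hEdef]; positivity
  -- measurability
  have hBmeas : Measurable B := measurable_besselI0.comp (by fun_prop)
  have hEmeas : Measurable E := by rw [hEdef]; fun_prop
  have hvmeas : Measurable v := by rw [hvdef]; exact (hBmeas.const_mul _)
  have hVLmeas : Measurable (fun r => E r * (v r * Real.log (v r))) :=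
    hEmeas.mul (hvmeas.mul hvmeas.log)
  -- bound v ≤ exp (c r - t)
  have hvle : ∀ r ∈ Ioi (0:ℝ), v r ≤ Real.exp (c * r + -t) := by
    intro r hr
    have hr0 : (0:ℝ) < r := hr
    have h1 : besselI0 (2 * a * b * r) ≤ Real.exp (2 * a * b * r) :=
      besselI0_le_exp (by positivity)
    calc v r = Real.exp (-t) * besselI0 (2 * a * b * r) := rfl
      _ ≤ Real.exp (-t) * Real.exp (2 * a * b * r) := by
          exact mul_le_mul_of_nonneg_left h1 (Real.exp_pos _).le
      _ = Real.exp (c * r + -t) := by rw [← Real.exp_add, hcdef]; ring_nf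
  -- integrability of E
  have intE : IntegrableOn E (Ioi (0:ℝ)) := by
    have base : IntegrableOn (fun x : ℝ => 2 * b * (x ^ 1 * Real.exp (-(b * x ^ 2))))
        (Ioi (0:ℝ)) := (moment_integrableOn hb 1).const_mul (2*b)
    refine base.congr_fun (fun r hr => ?_) measurableSet_Ioi
    simp only [hEdef, pow_one]
    ring
  -- integrability of E * v
  have intEv : IntegrableOn (fun r => E r * v r) (Ioi (0:ℝ)) := by
    have dom : IntegrableOn (fun r : ℝ => 2 * b * (r * Real.exp (-(b * r ^ 2) + c * r + -t)))
        (Ioi (0:ℝ)) := ((integrable_mul_exp_quadratic c (-t) hb).const_mul (2*b)).integrableOn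
    refine dom.mono' ((hEmeas.mul hvmeas).aestronglyMeasurable) ?_
    filter_upwards [ae_restrict_mem measurableSet_Ioi] with r hr
    have hr0 : (0:ℝ) < r := hr
    have h0 : 0 ≤ E r * v r := mul_nonneg (hEnn r hr) (hvpos r).le
    rw [Real.norm_of_nonneg h0]
    calc E r * v r ≤ E r * Real.exp (c * r + -t) :=
          mul_le_mul_of_nonneg_left (hvle r hr) (hEnn r hr)
      _ = 2 * b * (r * Real.exp (-(b * r ^ 2) + c * r + -t)) := by
          rw [hEdef]; simp only [Real.exp_add]; ring
  -- integrability of E * (v log v)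
  have intVL : IntegrableOn (fun r => E r * (v r * Real.log (v r))) (Ioi (0:ℝ)) := by
    have dom : IntegrableOn (fun r : ℝ => 2 * b * (r * Real.exp (-(b * r ^ 2) + 0 * r + -1))
        + 2 * b * (r * Real.exp (-(b * r ^ 2) + (2*c) * r + -(2*t)))) (Ioi (0:ℝ)) :=
      (((integrable_mul_exp_quadratic 0 (-1) hb).const_mul (2*b)).add
        ((integrable_mul_exp_quadratic (2*c) (-(2*t)) hb).const_mul (2*b))).integrableOn
    refine dom.mono' hVLmeas.aestronglyMeasurable ?_
    filter_upwards [ae_restrict_mem measurableSet_Ioi] with r hr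
    have hr0 : (0:ℝ) < r := hr
    have hvp := hvpos r
    have hupper : v r * Real.log (v r) ≤ Real.exp (2*c*r + -(2*t)) := by
      have hlog : Real.log (v r) ≤ v r - 1 := Real.log_le_sub_one_of_pos hvp
      have hv2 : v r ≤ Real.exp (c * r + -t) := hvle r hr
      have hw2 : Real.exp (c * r + -t) ^ 2 = Real.exp (2*c*r + -(2*t)) := by
        rw [sq, ← Real.exp_add]; congr 1; ring
      nlinarith [Real.exp_pos (c * r + -t)]
    have hlower : -Real.exp (-1) ≤ v r * Real.log (v r) := neg_exp_le_mul_log hvp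
    have habs : |v r * Real.log (v r)| ≤ Real.exp (-1) + Real.exp (2*c*r + -(2*t)) := by
      rw [abs_le]
      constructor
      · nlinarith [Real.exp_pos (2*c*r + -(2*t))]
      · nlinarith [Real.exp_pos (-1:ℝ)]
    rw [Real.norm_eq_abs, abs_mul, abs_of_nonneg (hEnn r hr)]
    calc E r * |v r * Real.log (v r)|
        ≤ E r * (Real.exp (-1) + Real.exp (2*c*r + -(2*t))) :=
          mul_le_mul_of_nonneg_left habs (hEnn r hr)
      _ = 2 * b * (r * Real.exp (-(b * r ^ 2) + 0 * r + -1))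
          + 2 * b * (r * Real.exp (-(b * r ^ 2) + (2*c) * r + -(2*t))) := by
          rw [hEdef]; simp only [Real.exp_add, zero_mul, Real.exp_zero]; ring
  -- the nonnegative part g
  set g : ℝ → ℝ := fun r => E r * (v r * Real.log (v r)) - (E r * v r - E r) with hgdef
  have intg : IntegrableOn g (Ioi (0:ℝ)) := intVL.sub (intEv.sub intE)
  -- values of the normalisation integrals
  have valE : ∫ r in Ioi (0:ℝ), E r = 1 := by
    have h := moment_eq hb 0
    have h2 : ∫ r in Ioi (0:ℝ), E r
        = ∫ r in Ioi (0:ℝ), 2 * b * r ^ (2*0+1) * Real.exp (-(b * r ^ 2)) := by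
      refine setIntegral_congr_fun measurableSet_Ioi (fun r _ => ?_)
      rw [hEdef]; ring
    rw [h2, h]; simp
  have valEv : ∫ r in Ioi (0:ℝ), E r * v r = 1 := by
    have h2 : ∫ r in Ioi (0:ℝ), E r * v r
        = ∫ r in Ioi (0:ℝ), Real.exp (-t)
            * (2 * b * r * Real.exp (-(b * r ^ 2)) * besselI0 (2 * a * b * r)) := by
      refine setIntegral_congr_fun measurableSet_Ioi (fun r _ => ?_)
      rw [hEdef, hvdef, hBdef]; ring
    rw [h2, integral_const_mul, rice_norm hb ha, ← Real.exp_add, htdef]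
    simp
  -- positivity of ∫ g
  have gpos : 0 < ∫ r in Ioi (0:ℝ), g r := by
    have hgnn : 0 ≤ᵐ[volume.restrict (Ioi (0:ℝ))] g := by
      filter_upwards [ae_restrict_mem measurableSet_Ioi] with r hr
      have key : g r = E r * (v r * Real.log (v r) - (v r - 1)) := by rw [hgdef]; ring
      rw [Pi.zero_apply, key]
      exact mul_nonneg (hEnn r hr) (by linarith [sub_one_le_mul_log (hvpos r)])
    rw [setIntegral_pos_iff_support_of_nonneg_ae hgnn intg]
    have hsub : Ioo (0:ℝ) σn ⊆ Function.support g ∩ Ioi 0 := by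
      rintro r ⟨hr0, hrσ⟩
      have hrI : r ∈ Ioi (0:ℝ) := hr0
      refine ⟨Function.mem_support.mpr (ne_of_gt ?_), hrI⟩
      have hvlt1 : v r < 1 := by
        have h1 : besselI0 (2 * a * b * r) ≤ Real.exp ((2 * a * b * r / 2) ^ 2) :=
          besselI0_le_exp_sq _
        have h2 : v r ≤ Real.exp ((a*b*r) ^ 2 + -t) := by
          calc v r ≤ Real.exp (-t) * Real.exp ((2 * a * b * r / 2) ^ 2) :=
                mul_le_mul_of_nonneg_left h1 (Real.exp_pos _).le
            _ = Real.exp ((a*b*r) ^ 2 + -t) := by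
                rw [← Real.exp_add]; congr 1; ring
        have hbr2 : b * r ^ 2 < 1 := by
          have : r ^ 2 < σn ^ 2 := by nlinarith
          calc b * r ^ 2 < b * σn ^ 2 := by exact (mul_lt_mul_iff_right₀ hb).mpr this
            _ = 1 := by rw [hbdef]; field_simp
        have hneg : (a*b*r) ^ 2 + -t < 0 := by
          have : (a*b*r)^2 = a^2*b*(b*r^2) := by ring
          rw [this, htdef]
          nlinarith
        calc v r ≤ Real.exp ((a*b*r) ^ 2 + -t) := h2
          _ < Real.exp 0 := Real.exp_lt_exp.mpr hneg
          _ = 1 := Real.exp_zero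
      have hstrict := sub_one_lt_mul_log (hvpos r) (ne_of_lt hvlt1)
      have key : g r = E r * (v r * Real.log (v r) - (v r - 1)) := by rw [hgdef]; ring
      rw [key]
      exact mul_pos (hEpos r hrI) (by linarith)
    calc (0:ℝ≥0∞) < volume (Ioo (0:ℝ) σn) := by
          rw [Real.volume_Ioo]
          exact ENNReal.ofReal_pos.mpr (by linarith)
      _ ≤ volume (Function.support g ∩ Ioi 0) := measure_mono hsub
  -- rewrite the original integral
  have step0 : ∫ r in Ioi (0 : ℝ),
      (Real.log (besselI0 (2 * a * r / σn ^ 2)) - a ^ 2 / σn ^ 2)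
        * (2 * r / σn ^ 2 * Real.exp (-(r ^ 2 + a ^ 2) / σn ^ 2)
          * besselI0 (2 * a * r / σn ^ 2))
      = ∫ r in Ioi (0:ℝ), E r * (v r * Real.log (v r)) := by
    refine setIntegral_congr_fun measurableSet_Ioi (fun r _ => ?_)
    have harg : 2 * a * r / σn ^ 2 = 2 * a * b * r := by
      rw [hbdef]; field_simp
    have ht' : a ^ 2 / σn ^ 2 = t := by rw [htdef, hbdef]; field_simp
    have h2r : 2 * r / σn ^ 2 = 2 * b * r := by rw [hbdef]; field_simp
    have hexp : Real.exp (-(r ^ 2 + a ^ 2) / σn ^ 2)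
        = Real.exp (-(b * r ^ 2)) * Real.exp (-t) := by
      rw [← Real.exp_add]; congr 1; rw [htdef, hbdef]; field_simp; ring
    have hlog : Real.log (besselI0 (2 * a * b * r)) - t = Real.log (v r) := by
      rw [hvdef, hBdef, Real.log_mul (Real.exp_ne_zero _) (besselI0_pos _).ne',
        Real.log_exp]
      ring
    rw [harg, ht', h2r, hexp, hlog, hEdef, hvdef, hBdef]
    ring
  have hsplit : ∫ r in Ioi (0:ℝ), E r * (v r * Real.log (v r))
      = (∫ r in Ioi (0:ℝ), g r)
        + ((∫ r in Ioi (0:ℝ), E r * v r) - ∫ r in Ioi (0:ℝ), E r) := by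
    have intSub : IntegrableOn (fun r => E r * v r - E r) (Ioi (0:ℝ)) := intEv.sub intE
    rw [← integral_sub intEv intE, ← integral_add intg intSub]
    refine setIntegral_congr_fun measurableSet_Ioi (fun r _ => ?_)
    simp only [hgdef]
    ring
  rw [step0, hsplit, valEv, valE]
  simpa using gpos
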